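/- Let k > 0, θ > 0, r > 0. Let X be a real random variable distributed as Gamma(k, θ), and let ε be a square-integrable real random variable independent of X with E[ε] = 1 and Var(ε) = v. Set Y = r·X·(1−X)·ε. If E[Y] = E[X] and Var(Y) = Var(X), then v·(k + 2) ≤ 1; in particular k ≤ 1/v − 2 when v > 0, and v ≤ 1/2. -/

import Mathlib

/-!
For `G = r X (1 - X)`, independence gives `E[Y] = E[G]` and `E[Y²] = (1 + v) E[G²]`, and the Gamma
moments `E[Xⁿ] = k (k + 1) ⋯ (k + n - 1) θⁿ` turn the two equilibrium conditions into `r s = 1` and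
`r² Q (1 + v) = 1`, where `s = 1 - (k + 1) θ` and `Q = 1 - 2 (k + 2) θ + (k + 2) (k + 3) θ²`.
Hence `(1 + v) Q = s²`, and the identity `(k + 2) (s² - Q) = Q - (1 - 2 (k + 2) θ)²` gives
`v (k + 2) Q ≤ Q` with `Q > 0`.
-/

open MeasureTheory ProbabilityTheory Real

theorem Real.Gamma_add_natCast_eq_ascPochhammer_mul {a : ℝ} (ha : ∀ m : ℕ, a ≠ -m) (n : ℕ) :
    Gamma (a + n) = (ascPochhammer ℝ n).eval a * Gamma a := by
  induction n with
  | zero => simp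
  | succ n ih =>
    have hne : a + n ≠ 0 := fun h => ha n (by linarith)
    rw [Nat.cast_succ, ← add_assoc, Gamma_add_one hne, ih, ascPochhammer_succ_eval]
    ring

namespace ProbabilityTheory

variable {a r : ℝ}

lemma pow_mul_gammaPDFReal (ha : 0 < a) (hr : 0 < r) (n : ℕ) (x : ℝ) :
    x ^ n * gammaPDFReal a r x
      = (ascPochhammer ℝ n).eval a / r ^ n * gammaPDFReal (a + n) r x := by
  rcases n.eq_zero_or_pos with rfl | hn
  · simp
  unfold gammaPDFReal
  split_ifs with hx
  · have hxpow : x ^ (a + n - 1) = x ^ (a - 1) * x ^ n := by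
      rw [add_sub_right_comm, rpow_add_natCast' hx ?_]
      have : (1:ℝ) ≤ n := by exact_mod_cast hn
      linarith
    have hpos := ascPochhammer_pos n a ha
    rw [hxpow, rpow_add_natCast hr.ne', Gamma_add_natCast_eq_ascPochhammer_mul
      (fun m => (neg_nonpos.2 m.cast_nonneg).trans_lt ha |>.ne') n]
    field_simp
  · simp

lemma measurable_gammaPDF : Measurable (gammaPDF a r) :=
  (measurable_gammaPDFReal a r).ennreal_ofReal

lemma toReal_gammaPDF (ha : 0 < a) (hr : 0 < r) (x : ℝ) :
    (gammaPDF a r x).toReal = gammaPDFReal a r x :=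
  ENNReal.toReal_ofReal (gammaPDFReal_nonneg ha hr x)

lemma integrable_gammaPDFReal (ha : 0 < a) (hr : 0 < r) : Integrable (gammaPDFReal a r) := by
  simpa only [toReal_gammaPDF ha hr] using integrable_toReal_of_lintegral_ne_top
    (measurable_gammaPDF (a := a) (r := r)).aemeasurable (by simp [ha, hr])

lemma integral_gammaPDFReal_eq_one (ha : 0 < a) (hr : 0 < r) : ∫ x, gammaPDFReal a r x = 1 := by
  rw [integral_eq_lintegral_of_nonneg_ae (ae_of_all _ (gammaPDFReal_nonneg ha hr))
    (measurable_gammaPDFReal a r).aestronglyMeasurable]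
  exact congrArg ENNReal.toReal (lintegral_gammaPDF_eq_one ha hr)

lemma integrable_gammaMeasure_iff (ha : 0 < a) (hr : 0 < r) {f : ℝ → ℝ} :
    Integrable f (gammaMeasure a r) ↔ Integrable (fun x => f x * gammaPDFReal a r x) := by
  simp only [gammaMeasure, ← toReal_gammaPDF ha hr]
  exact integrable_withDensity_iff measurable_gammaPDF
    (ae_of_all _ fun _ => ENNReal.ofReal_lt_top)

lemma integral_gammaMeasure (ha : 0 < a) (hr : 0 < r) (f : ℝ → ℝ) :
    ∫ x, f x ∂gammaMeasure a r = ∫ x, f x * gammaPDFReal a r x := by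
  rw [gammaMeasure, integral_withDensity_eq_integral_toReal_smul measurable_gammaPDF
    (ae_of_all _ fun _ => ENNReal.ofReal_lt_top)]
  simp only [toReal_gammaPDF ha hr, smul_eq_mul, mul_comm]

lemma integrable_pow_gammaMeasure (ha : 0 < a) (hr : 0 < r) (n : ℕ) :
    Integrable (fun x => x ^ n) (gammaMeasure a r) := by
  rw [integrable_gammaMeasure_iff ha hr]
  simp only [pow_mul_gammaPDFReal ha hr]
  exact (integrable_gammaPDFReal (by positivity) hr).const_mul _

lemma integral_pow_gammaMeasure (ha : 0 < a) (hr : 0 < r) (n : ℕ) :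
    ∫ x, x ^ n ∂gammaMeasure a r = (ascPochhammer ℝ n).eval a / r ^ n := by
  simp only [integral_gammaMeasure ha hr, pow_mul_gammaPDFReal ha hr, integral_const_mul,
    integral_gammaPDFReal_eq_one (by positivity : 0 < a + n) hr, mul_one]

section RandomVariable

variable {Ω : Type*} {mΩ : MeasurableSpace Ω} {μ : Measure Ω} {X : Ω → ℝ}

lemma aemeasurable_of_map_eq_gammaMeasure (ha : 0 < a) (hr : 0 < r)
    (hX : μ.map X = gammaMeasure a r) : AEMeasurable X μ := by
  have := isProbabilityMeasure_gammaMeasure ha hr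
  exact .of_map_ne_zero (hX ▸ IsProbabilityMeasure.ne_zero _)

lemma integrable_pow_of_map_eq_gammaMeasure (ha : 0 < a) (hr : 0 < r)
    (hX : μ.map X = gammaMeasure a r) (n : ℕ) : Integrable (fun ω => X ω ^ n) μ :=
  (integrable_map_measure (g := fun x : ℝ => x ^ n) (by fun_prop)
    (aemeasurable_of_map_eq_gammaMeasure ha hr hX)).1 (hX ▸ integrable_pow_gammaMeasure ha hr n)

lemma integral_pow_of_map_eq_gammaMeasure (ha : 0 < a) (hr : 0 < r)
    (hX : μ.map X = gammaMeasure a r) (n : ℕ) :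
    ∫ ω, X ω ^ n ∂μ = (ascPochhammer ℝ n).eval a / r ^ n := by
  rw [← integral_pow_gammaMeasure ha hr, ← hX,
    integral_map (f := fun x : ℝ => x ^ n) (aemeasurable_of_map_eq_gammaMeasure ha hr hX)
      (by fun_prop)]

end RandomVariable

lemma IndepFun.variance_mul {Ω : Type*} {mΩ : MeasurableSpace Ω} {μ : Measure Ω}
    [IsProbabilityMeasure μ] {G ε : Ω → ℝ} (h : IndepFun G ε μ) (hG : MemLp G 2 μ)
    (hε : MemLp ε 2 μ) :
    variance (G * ε) μ = μ[G ^ 2] * μ[ε ^ 2] - (μ[G] * μ[ε]) ^ 2 := by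
  have hsq : IndepFun (G ^ 2) (ε ^ 2) μ := by
    exact h.comp (φ := fun x : ℝ => x ^ 2) (ψ := fun x : ℝ => x ^ 2) (by fun_prop) (by fun_prop)
  have hmem : MemLp (G * ε) 2 μ := by
    refine (memLp_two_iff_integrable_sq (hG.1.mul hε.1)).2 ?_
    have := hsq.integrable_mul hG.integrable_sq hε.integrable_sq
    rwa [← mul_pow] at this
  rw [variance_eq_sub hmem, mul_pow, hsq.integral_mul_eq_mul_integral (hG.1.pow 2) (hε.1.pow 2),
    h.integral_mul_eq_mul_integral hG.1 hε.1]

end ProbabilityTheory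

section Logistic

variable {Ω : Type*} {mΩ : MeasurableSpace Ω} {μ : Measure Ω} {X ε : Ω → ℝ}

lemma integral_mul_mul_one_sub (h1 : Integrable X μ) (h2 : Integrable (fun ω => X ω ^ 2) μ)
    (r : ℝ) : ∫ ω, r * X ω * (1 - X ω) ∂μ = r * (μ[X] - ∫ ω, X ω ^ 2 ∂μ) := by
  simp_rw [mul_assoc, mul_one_sub, ← sq]
  rw [integral_const_mul, integral_sub h1 h2]

lemma integral_mul_mul_one_sub_sq (h2 : Integrable (fun ω => X ω ^ 2) μ)
    (h3 : Integrable (fun ω => X ω ^ 3) μ) (h4 : Integrable (fun ω => X ω ^ 4) μ) (r : ℝ) :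
    ∫ ω, (r * X ω * (1 - X ω)) ^ 2 ∂μ
      = r ^ 2 * (∫ ω, X ω ^ 2 ∂μ - 2 * ∫ ω, X ω ^ 3 ∂μ + ∫ ω, X ω ^ 4 ∂μ) := by
  have hpoly (x : ℝ) : (r * x * (1 - x)) ^ 2 = r ^ 2 * (x ^ 2 - 2 * x ^ 3 + x ^ 4) := by ring
  simp_rw [hpoly]
  rw [integral_const_mul, integral_add (f := fun ω => X ω ^ 2 - 2 * X ω ^ 3)
    (h2.sub (h3.const_mul 2)) h4, integral_sub h2 (h3.const_mul 2), integral_const_mul]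

lemma memLp_two_mul_mul_one_sub (hX : AEStronglyMeasurable X μ)
    (h2 : Integrable (fun ω => X ω ^ 2) μ) (h3 : Integrable (fun ω => X ω ^ 3) μ)
    (h4 : Integrable (fun ω => X ω ^ 4) μ) (r : ℝ) :
    MemLp (fun ω => r * X ω * (1 - X ω)) 2 μ := by
  refine (memLp_two_iff_integrable_sq (by fun_prop)).2 ?_
  have hpoly (x : ℝ) : (r * x * (1 - x)) ^ 2 = r ^ 2 * (x ^ 2 - 2 * x ^ 3 + x ^ 4) := by ring
  simp_rw [hpoly]
  exact ((h2.sub (h3.const_mul 2)).add h4).const_mul _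

lemma integral_logistic_mul_of_indepFun (hindep : IndepFun ε X μ) (hXm : AEMeasurable X μ)
    (h1 : Integrable X μ) (h2 : Integrable (fun ω => X ω ^ 2) μ) (hε : AEStronglyMeasurable ε μ)
    (r : ℝ) :
    ∫ ω, r * X ω * (1 - X ω) * ε ω ∂μ = r * (μ[X] - ∫ ω, X ω ^ 2 ∂μ) * μ[ε] := by
  have hGε := hindep.symm.comp (φ := fun x => r * x * (1 - x)) (ψ := id) (by fun_prop)
    measurable_id
  rw [← integral_mul_mul_one_sub h1 h2]
  exact hGε.integral_mul_eq_mul_integral (by fun_prop) hε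

lemma variance_logistic_mul_of_indepFun [IsProbabilityMeasure μ] (hindep : IndepFun ε X μ)
    (hXm : AEMeasurable X μ) (h1 : Integrable X μ) (h2 : Integrable (fun ω => X ω ^ 2) μ)
    (h3 : Integrable (fun ω => X ω ^ 3) μ) (h4 : Integrable (fun ω => X ω ^ 4) μ)
    (hε : MemLp ε 2 μ) (r : ℝ) :
    variance (fun ω => r * X ω * (1 - X ω) * ε ω) μ
      = r ^ 2 * (∫ ω, X ω ^ 2 ∂μ - 2 * ∫ ω, X ω ^ 3 ∂μ + ∫ ω, X ω ^ 4 ∂μ) * μ[ε ^ 2]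
        - (r * (μ[X] - ∫ ω, X ω ^ 2 ∂μ) * μ[ε]) ^ 2 := by
  have hGε := hindep.symm.comp (φ := fun x => r * x * (1 - x)) (ψ := id) (by fun_prop)
    measurable_id
  have hG := memLp_two_mul_mul_one_sub hXm.aestronglyMeasurable h2 h3 h4 r
  rw [← integral_mul_mul_one_sub h1 h2, ← integral_mul_mul_one_sub_sq h2 h3 h4]
  exact hGε.variance_mul hG hε

end Logistic

lemma mul_add_two_le_one_of_logistic_moment_eqs {k θ r v : ℝ} (hk : 0 < k) (hθ : 0 < θ)
    (hv : 0 ≤ v) (hmean : r * (k * θ - k * (k + 1) * θ ^ 2) = k * θ)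
    (hsq : r ^ 2 * (k * (k + 1) * θ ^ 2 - 2 * (k * (k + 1) * (k + 2) * θ ^ 3)
      + k * (k + 1) * (k + 2) * (k + 3) * θ ^ 4) * (v + 1) = k * (k + 1) * θ ^ 2) :
    v * (k + 2) ≤ 1 := by
  set s := 1 - (k + 1) * θ
  set Q := 1 - 2 * (k + 2) * θ + (k + 2) * (k + 3) * θ ^ 2
  have hrs : r * s = 1 :=
    mul_left_cancel₀ (by positivity : k * θ ≠ 0) (by linear_combination hmean)
  have hrQ : r ^ 2 * Q * (v + 1) = 1 :=
    mul_left_cancel₀ (by positivity : k * (k + 1) * θ ^ 2 ≠ 0) (by linear_combination hsq)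
  have hQs : Q * (v + 1) = s ^ 2 := by
    linear_combination s ^ 2 * hrQ - Q * (v + 1) * (r * s + 1) * hrs
  have hQ : 0 < Q := by
    have hs : s ≠ 0 := right_ne_zero_of_mul_eq_one hrs
    nlinarith [sq_pos_of_ne_zero hs]
  have key : v * (k + 2) * Q = Q - (1 - 2 * (k + 2) * θ) ^ 2 := by
    linear_combination (k + 2) * hQs
  nlinarith [sq_nonneg (1 - 2 * (k + 2) * θ)]

theorem stmt8_general {Ω : Type*} {mΩ : MeasurableSpace Ω} (μ : Measure Ω) [IsProbabilityMeasure μ]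
    (k θ r v : ℝ) (hk : 0 < k) (hθ : 0 < θ)
    (X ε : Ω → ℝ)
    (hX : Measure.map X μ = gammaMeasure k θ⁻¹)
    (hε : MemLp ε 2 μ) (hindep : IndepFun ε X μ)
    (hεmean : ∫ ω, ε ω ∂μ = 1) (hεvar : variance ε μ = v)
    (Y : Ω → ℝ) (hY : Y = fun ω => r * X ω * (1 - X ω) * ε ω)
    (hmean : ∫ ω, Y ω ∂μ = ∫ ω, X ω ∂μ) (hvar : variance Y μ = variance X μ) :
    v * (k + 2) ≤ 1 ∧ (0 < v → k ≤ 1 / v - 2) ∧ v ≤ 1 / 2 := by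
  have hθ' : 0 < θ⁻¹ := inv_pos.2 hθ
  have hXm := aemeasurable_of_map_eq_gammaMeasure hk hθ' hX
  have hint := integrable_pow_of_map_eq_gammaMeasure hk hθ' hX
  have h1 : Integrable X μ := by simpa using hint 1
  have hmom (n : ℕ) : ∫ ω, X ω ^ n ∂μ = (ascPochhammer ℝ n).eval k * θ ^ n := by
    rw [integral_pow_of_map_eq_gammaMeasure hk hθ' hX, inv_pow, div_inv_eq_mul]
  have hEX : μ[X] = k * θ := by simpa [ascPochhammer_succ_eval] using hmom 1
  have hEX2 : ∫ ω, X ω ^ 2 ∂μ = k * (k + 1) * θ ^ 2 := by simp [hmom, ascPochhammer_succ_eval]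
  have hEX3 : ∫ ω, X ω ^ 3 ∂μ = k * (k + 1) * (k + 2) * θ ^ 3 := by
    simp [hmom, ascPochhammer_succ_eval]
  have hEX4 : ∫ ω, X ω ^ 4 ∂μ = k * (k + 1) * (k + 2) * (k + 3) * θ ^ 4 := by
    simp [hmom, ascPochhammer_succ_eval]
  have hEε2 : μ[ε ^ 2] = v + 1 := by
    have h := variance_eq_sub hε
    rw [hεvar, hεmean] at h
    linarith
  rw [hY, integral_logistic_mul_of_indepFun hindep hXm h1 (hint 2) hε.1, hεmean, mul_one]
    at hmean
  have hX2 : MemLp X 2 μ := (memLp_two_iff_integrable_sq hXm.aestronglyMeasurable).2 (hint 2)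
  rw [hY, variance_logistic_mul_of_indepFun hindep hXm h1 (hint 2) (hint 3) (hint 4) hε,
    hmean, hεmean, hEε2, variance_eq_sub hX2] at hvar
  simp only [Pi.pow_apply, hEX, hEX2, hEX3, hEX4] at hmean hvar
  have hkey : v * (k + 2) ≤ 1 :=
    mul_add_two_le_one_of_logistic_moment_eqs hk hθ (hεvar ▸ variance_nonneg ε μ) hmean
      (by linarith)
  refine ⟨hkey, fun hv₀ => ?_, by nlinarith⟩
  rw [le_sub_iff_add_le, le_div_iff₀ hv₀]
  linarith

/-- Let `k, θ, r > 0`, `X ~ Gamma(k, θ)` (rate `1/θ`), `ε` square-integrable,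
independent of `X`, with `E[ε] = 1` and `Var(ε) = v`, and set `Y = r·X·(1−X)·ε`. If
`E[Y] = E[X]` and `Var(Y) = Var(X)`, then `v·(k + 2) ≤ 1`; in particular `k ≤ 1/v − 2`
when `v > 0`, and `v ≤ 1/2`. -/
theorem stmt8 {Ω : Type*} {mΩ : MeasurableSpace Ω} (μ : Measure Ω) [IsProbabilityMeasure μ]
    (k θ r v : ℝ) (hk : 0 < k) (hθ : 0 < θ) (hr : 0 < r)
    (X ε : Ω → ℝ) (hXm : Measurable X)
    (hX : Measure.map X μ = gammaMeasure k θ⁻¹)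
    (hε : MemLp ε 2 μ) (hindep : IndepFun ε X μ)
    (hεmean : ∫ ω, ε ω ∂μ = 1) (hεvar : variance ε μ = v)
    (Y : Ω → ℝ) (hY : Y = fun ω => r * X ω * (1 - X ω) * ε ω)
    (hmean : ∫ ω, Y ω ∂μ = ∫ ω, X ω ∂μ) (hvar : variance Y μ = variance X μ) :
    v * (k + 2) ≤ 1 ∧ (0 < v → k ≤ 1 / v - 2) ∧ v ≤ 1 / 2 :=
  stmt8_general (mΩ := mΩ) μ k θ r v hk hθ X ε hX hε hindep hεmean hεvar Y hY hmean hvar
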